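/- Let F be a type, X a fan-set on F, and J ⊆ J₁ ⊆ J₂ ⊆ I subsets of F. For h ∈ X set A(h) := {g ∈ C^{J₂}_{J₁} | g ⇝ h}. Then for any h₁, h₂ ∈ C^I_J there is a bijection between A(h₁) and A(h₂); explicitly, if u₁, u₂ ∈ X satisfy uᵢ ⇝ hᵢ and Z(uᵢ) = J (i = 1,2), then the map g ↦ g * u₁ * u₂ is a bijection of A(h₁) onto A(h₂). -/

import Mathlib

/-- Zero-set of a `SignType`-valued function. -/
def Zset {F : Type*} (g : F → SignType) : Set F := {a | g a = 0}

/-- `h` is a specialization of `g` (written `g ⇝ h`): `h = h² * g` pointwise. -/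
def Spez {F : Type*} (g h : F → SignType) : Prop := h = h ^ 2 * g

/-- A fan-set: a set of `SignType`-valued functions closed under products of
any three of its elements. -/
def IsFanSet {F : Type*} (X : Set (F → SignType)) : Prop :=
  ∀ a ∈ X, ∀ b ∈ X, ∀ c ∈ X, a * b * c ∈ X

/-- `SLev X J I`: elements of `X` of level `I` having a generization of level `J`. -/
def SLev {F : Type*} (X : Set (F → SignType)) (J I : Set F) : Set (F → SignType) :=
  {h | h ∈ X ∧ Zset h = I ∧ ∃ u ∈ X, Spez u h ∧ Zset u = J}

/-- `CLev X J I`: elements of `X` of level `I` having a generization of level `J`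
but none of any strictly lower level. -/
def CLev {F : Type*} (X : Set (F → SignType)) (J I : Set F) : Set (F → SignType) :=
  {h | h ∈ SLev X J I ∧ ∀ g ∈ X, Spez g h → J ⊆ Zset g}

/-!
Multiplication by a fixed function preserves specialization, and
`h₁ u₁ u₂ = h₁² u₂ = h₂² u₂ = h₂` since `Z(h₁) = Z(h₂)`; so `g ⇝ h₁` gives `g u₁ u₂ ⇝ h₂`, and a
generization `v` of `g` gives the generization `v u₁ u₂`. Minimality of `h₁`, `h₂` in `C^I_J`
puts `J = Z(uᵢ)` inside the zero set of every generization in `X` of `h₁` or `h₂`; on such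
functions multiplying by `uᵢ` changes no zero set and multiplying by `uᵢ` twice is the identity.
Hence `g ↦ g u₂ u₁` inverts the map, and it carries the minimality condition of `C^{J₂}_{J₁}`
back from `A(h₂)` to `A(h₁)`.
-/

section

variable {F : Type*}

theorem spez_iff {g h : F → SignType} : Spez g h ↔ ∀ a, h a ≠ 0 → g a = h a := by
  unfold Spez
  rw [funext_iff]
  refine forall_congr' fun a => ?_
  simp only [Pi.mul_apply, Pi.pow_apply]
  have : ∀ x y : SignType, y = y ^ 2 * x ↔ (y ≠ 0 → x = y) := by decide
  exact this (g a) (h a)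

namespace Spez

theorem trans {a b c : F → SignType} (hab : Spez a b) (hbc : Spez b c) : Spez a c := by
  rw [spez_iff] at *
  intro x hx
  rw [hab x (hbc x hx ▸ hx), hbc x hx]

theorem mul_right {g h : F → SignType} (hgh : Spez g h) (w : F → SignType) :
    Spez (g * w) (h * w) := by
  rw [spez_iff] at *
  intro a ha
  simp only [Pi.mul_apply, ne_eq, mul_eq_zero, not_or] at ha ⊢
  rw [hgh a ha.1]

theorem mul_eq_sq {u h : F → SignType} (huh : Spez u h) : h * u = h ^ 2 := by
  funext a
  by_cases ha : h a = 0
  · simp [ha]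
  · simp [spez_iff.1 huh a ha, sq]

end Spez

theorem sq_eq_sq_of_zset_eq {h₁ h₂ : F → SignType} (hZ : Zset h₁ = Zset h₂) :
    h₁ ^ 2 = h₂ ^ 2 := by
  funext a
  have : ∀ x y : SignType, (x = 0 ↔ y = 0) → x ^ 2 = y ^ 2 := by decide
  exact this _ _ (Set.ext_iff.1 hZ a)

theorem zset_mul (g h : F → SignType) : Zset (g * h) = Zset g ∪ Zset h := by
  ext a
  simp [Zset]

theorem zset_mul_mul_of_subset {g u₁ u₂ : F → SignType} (h₁ : Zset u₁ ⊆ Zset g)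
    (h₂ : Zset u₂ ⊆ Zset g) : Zset (g * u₁ * u₂) = Zset g := by
  rw [zset_mul, zset_mul, Set.union_eq_left.2 h₁, Set.union_eq_left.2 h₂]

theorem mul_mul_self_of_zset_subset {g u : F → SignType} (h : Zset u ⊆ Zset g) :
    g * u * u = g := by
  funext a
  by_cases ha : u a = 0
  · simp [show g a = 0 from h ha]
  · have : ∀ x y : SignType, y ≠ 0 → x * y * y = x := by decide
    exact this _ _ ha

theorem mul_mul_mul_mul_of_zset_subset {g u₁ u₂ : F → SignType} (h₁ : Zset u₁ ⊆ Zset g)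
    (h₂ : Zset u₂ ⊆ Zset g) : g * u₁ * u₂ * u₂ * u₁ = g := by
  have h₂' : Zset u₂ ⊆ Zset (g * u₁) := zset_mul g u₁ ▸ h₂.trans Set.subset_union_left
  rw [mul_mul_self_of_zset_subset h₂', mul_mul_self_of_zset_subset h₁]

theorem mapsTo_mul_mul_of_mem_cLev {X : Set (F → SignType)} (hX : IsFanSet X)
    {J J₁ J₂ I : Set F} {h₁ h₂ u₁ u₂ : F → SignType}
    (hh₁ : h₁ ∈ CLev X J I) (hh₂ : h₂ ∈ CLev X J I) (hu₁X : u₁ ∈ X) (hu₂X : u₂ ∈ X)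
    (hs₁ : Spez u₁ h₁) (hs₂ : Spez u₂ h₂) (hZu₁ : Zset u₁ ⊆ J) (hZu₂ : Zset u₂ ⊆ J) :
    Set.MapsTo (fun g => g * u₁ * u₂)
      {g | g ∈ CLev X J₁ J₂ ∧ Spez g h₁} {g | g ∈ CLev X J₁ J₂ ∧ Spez g h₂} := by
  obtain ⟨⟨-, hZh₁, -⟩, hC₁⟩ := hh₁
  obtain ⟨⟨-, hZh₂, -⟩, hC₂⟩ := hh₂
  rintro g ⟨⟨⟨hgX, hZg, v, hvX, hvg, hZv⟩, hgC⟩, hgh₁⟩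
  have hJg : J ⊆ Zset g := hC₁ g hgX hgh₁
  have hJv : J ⊆ Zset v := hC₁ v hvX (hvg.trans hgh₁)
  have hg'h₂ : Spez (g * u₁ * u₂) h₂ := by
    have := (hgh₁.mul_right u₁).mul_right u₂
    rwa [hs₁.mul_eq_sq, sq_eq_sq_of_zset_eq (hZh₁.trans hZh₂.symm), ← hs₂] at this
  refine ⟨⟨⟨hX g hgX u₁ hu₁X u₂ hu₂X, ?_, v * u₁ * u₂, hX v hvX u₁ hu₁X u₂ hu₂X,
    (hvg.mul_right u₁).mul_right u₂, ?_⟩, ?_⟩, hg'h₂⟩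
  · rw [zset_mul_mul_of_subset (hZu₁.trans hJg) (hZu₂.trans hJg), hZg]
  · rw [zset_mul_mul_of_subset (hZu₁.trans hJv) (hZu₂.trans hJv), hZv]
  · intro w hwX hwg'
    have hJw : J ⊆ Zset w := hC₂ w hwX (hwg'.trans hg'h₂)
    have hwg : Spez (w * u₂ * u₁) g := by
      have := (hwg'.mul_right u₂).mul_right u₁
      rwa [mul_mul_mul_mul_of_zset_subset (hZu₁.trans hJg) (hZu₂.trans hJg)] at this
    rw [← zset_mul_mul_of_subset (hZu₂.trans hJw) (hZu₁.trans hJw)]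
    exact hgC _ (hX w hwX u₂ hu₂X u₁ hu₁X) hwg

end

theorem bijOn_A_sets_general {F : Type*} (X : Set (F → SignType)) (hX : IsFanSet X)
    (J J₁ J₂ I : Set F)
    (h₁ h₂ : F → SignType) (hh₁ : h₁ ∈ CLev X J I) (hh₂ : h₂ ∈ CLev X J I)
    (u₁ u₂ : F → SignType) (hu₁X : u₁ ∈ X) (hu₂X : u₂ ∈ X)
    (hs₁ : Spez u₁ h₁) (hs₂ : Spez u₂ h₂)
    (hZu₁ : Zset u₁ = J) (hZu₂ : Zset u₂ = J) :
    Set.BijOn (fun g => g * u₁ * u₂)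
      {g | g ∈ CLev X J₁ J₂ ∧ Spez g h₁}
      {g | g ∈ CLev X J₁ J₂ ∧ Spez g h₂} := by
  refine Set.InvOn.bijOn ⟨?_, ?_⟩
    (mapsTo_mul_mul_of_mem_cLev hX hh₁ hh₂ hu₁X hu₂X hs₁ hs₂ hZu₁.le hZu₂.le)
    (mapsTo_mul_mul_of_mem_cLev hX hh₂ hh₁ hu₂X hu₁X hs₂ hs₁ hZu₂.le hZu₁.le)
  · rintro g ⟨⟨⟨hgX, -⟩, -⟩, hgh₁⟩
    have hJg := hh₁.2 g hgX hgh₁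
    exact mul_mul_mul_mul_of_zset_subset (hZu₁ ▸ hJg) (hZu₂ ▸ hJg)
  · rintro g ⟨⟨⟨hgX, -⟩, -⟩, hgh₂⟩
    have hJg := hh₂.2 g hgX hgh₂
    exact mul_mul_mul_mul_of_zset_subset (hZu₂ ▸ hJg) (hZu₁ ▸ hJg)

theorem bijOn_A_sets {F : Type*} (X : Set (F → SignType)) (hX : IsFanSet X)
    (J J₁ J₂ I : Set F) (hJ : J ⊆ J₁) (hJ₁ : J₁ ⊆ J₂) (hJ₂ : J₂ ⊆ I)
    (h₁ h₂ : F → SignType) (hh₁ : h₁ ∈ CLev X J I) (hh₂ : h₂ ∈ CLev X J I)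
    (u₁ u₂ : F → SignType) (hu₁X : u₁ ∈ X) (hu₂X : u₂ ∈ X)
    (hs₁ : Spez u₁ h₁) (hs₂ : Spez u₂ h₂)
    (hZu₁ : Zset u₁ = J) (hZu₂ : Zset u₂ = J) :
    Set.BijOn (fun g => g * u₁ * u₂)
      {g | g ∈ CLev X J₁ J₂ ∧ Spez g h₁}
      {g | g ∈ CLev X J₁ J₂ ∧ Spez g h₂} :=
  bijOn_A_sets_general X hX J J₁ J₂ I h₁ h₂ hh₁ hh₂ u₁ u₂ hu₁X hu₂X hs₁ hs₂ hZu₁ hZu₂
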